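/- Suppose a UAV's positions q[n−1] and q[n] satisfy dist(q[n−1], c) ≥ √(R² + (Vδ/2)²) and dist(q[n], c) ≥ √(R² + (Vδ/2)²), and dist(q[n−1], q[n]) ≤ Vδ. Then every point on the straight-line path from q[n−1] to q[n] is at distance at least R from c. -/
import Mathlib

lemma key_norm_identity {E : Type*} [NormedAddCommGroup E] [InnerProductSpace ℝ E]
    (a b : E) (t : ℝ) :
    ‖(1 - t) • a + t • b‖ ^ 2
      = (1 - t) * ‖a‖ ^ 2 + t * ‖b‖ ^ 2 - t * (1 - t) * ‖a - b‖ ^ 2 := by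
  simp only [← real_inner_self_eq_norm_sq, inner_add_add_self, inner_sub_sub_self,
    real_inner_smul_left, real_inner_smul_right, real_inner_comm a b]
  ring

theorem uav_path_avoids_nfz
    (c q₀ q₁ : EuclideanSpace ℝ (Fin 2)) (R V δ : ℝ)
    (hR : 0 ≤ R) (hV : 0 < V) (hδ : 0 < δ)
    (h₀ : Real.sqrt (R ^ 2 + (V * δ / 2) ^ 2) ≤ dist q₀ c)
    (h₁ : Real.sqrt (R ^ 2 + (V * δ / 2) ^ 2) ≤ dist q₁ c)
    (hlen : dist q₀ q₁ ≤ V * δ) :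
    ∀ x ∈ segment ℝ q₀ q₁, R ≤ dist x c := by
  intro x hx
  obtain ⟨s, t, hs, ht, hst, rfl⟩ := hx
  have hs1 : s = 1 - t := by linarith
  subst hs1
  have hK : (0 : ℝ) ≤ R ^ 2 + (V * δ / 2) ^ 2 := by positivity
  have hq0 : R ^ 2 + (V * δ / 2) ^ 2 ≤ dist q₀ c ^ 2 := by
    have := Real.sqrt_le_sqrt (Real.sq_sqrt hK ▸ pow_le_pow_left₀ (Real.sqrt_nonneg _) h₀ 2)
    nlinarith [Real.sq_sqrt hK, Real.sqrt_nonneg (R ^ 2 + (V * δ / 2) ^ 2), dist_nonneg (x := q₀) (y := c)]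
  have hq1 : R ^ 2 + (V * δ / 2) ^ 2 ≤ dist q₁ c ^ 2 := by
    nlinarith [Real.sq_sqrt hK, Real.sqrt_nonneg (R ^ 2 + (V * δ / 2) ^ 2), dist_nonneg (x := q₁) (y := c)]
  have hrw : (1 - t) • q₀ + t • q₁ - c = (1 - t) • (q₀ - c) + t • (q₁ - c) := by
    module
  have hdist : dist ((1 - t) • q₀ + t • q₁) c ^ 2
      = (1 - t) * dist q₀ c ^ 2 + t * dist q₁ c ^ 2 - t * (1 - t) * dist q₀ q₁ ^ 2 := by
    rw [dist_eq_norm, dist_eq_norm, dist_eq_norm, dist_eq_norm, hrw,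
      key_norm_identity]
    congr 2
    rw [sub_sub_sub_cancel_right]
  have hd2 : R ^ 2 ≤ dist ((1 - t) • q₀ + t • q₁) c ^ 2 := by
    rw [hdist]
    have hlen2 : dist q₀ q₁ ^ 2 ≤ (V * δ) ^ 2 := by
      nlinarith [dist_nonneg (x := q₀) (y := q₁)]
    nlinarith [mul_nonneg ht hs, sq_nonneg (1 - 2 * t), dist_nonneg (x := q₀) (y := q₁),
      mul_nonneg (mul_nonneg ht hs) (sq_nonneg (dist q₀ q₁))]
  nlinarith [dist_nonneg (x := (1 - t) • q₀ + t • q₁) (y := c)]
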